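/- arXiv:1712.06779 — 4 statements merged into one kernel-verified Lean document; each statement's English description precedes it below -/
import Mathlib

section
/- Let X be a topological space, W ⊆ X × X an open set, and H : W × [0,1] → X × X a contraction of W to the basepoint (x₀, x₀) in X × X, i.e. H(u,0) = u and H(u,1) = (x₀, x₀) for all u ∈ W, and let p₁, p₂ : X × X → X be the coordinate projections. Then the map ρ : W → C([0,1], X) given by ρ(u)(t) = p₁(H(u, 2t)) for 0 ≤ t ≤ 1/2 and ρ(u)(t) = p₂(H(u, 2 - 2t)) for 1/2 ≤ t ≤ 1 is a continuous local section over W of the endpoint-pair map π : C([0,1], X) → X × X, i.e. ρ(u)(0) = p₁(u) and ρ(u)(1) = p₂(u) for all u ∈ W. -/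
open Set unitInterval

noncomputable section

/-- A set `U ⊆ X × X` admits a continuous local section of the endpoint map
`π : C(I, X) → X × X`, `γ ↦ (γ 0, γ 1)`. -/
def HasSecAt {X : Type*} [TopologicalSpace X] (U : Set (X × X)) : Prop :=
  ∃ s : C(U, C(unitInterval, X)),
    ∀ u : U, s u 0 = (u : X × X).1 ∧ s u 1 = (u : X × X).2

/-- `TC(X) ≤ n` : `X × X` is covered by `n` open sets, each with a section of the
endpoint map. -/
def TCLE (X : Type*) [TopologicalSpace X] (n : ℕ) : Prop :=
  ∃ U : Fin n → Set (X × X), (∀ i, IsOpen (U i)) ∧ (⋃ i, U i) = univ ∧ ∀ i, HasSecAt (U i)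

/-- Farber's (non-reduced) topological complexity, valued in `ℕ∞`. -/
def tc (X : Type*) [TopologicalSpace X] : ℕ∞ :=
  sInf {n : ℕ∞ | ∃ m : ℕ, n = m ∧ TCLE X m}

/-- `W` is contractible within `X` : the inclusion `W ↪ X` is null-homotopic. -/
def ContractibleIn {X : Type*} [TopologicalSpace X] (W : Set X) : Prop :=
  ∃ (x₀ : X) (F : C(W × unitInterval, X)),
    (∀ w : W, F (w, 0) = w) ∧ (∀ w : W, F (w, 1) = x₀)

/-- `cat(X) ≤ n` : `X` is covered by `n` open sets, each contractible within `X`. -/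
def CatLE (X : Type*) [TopologicalSpace X] (n : ℕ) : Prop :=
  ∃ U : Fin n → Set X, (∀ i, IsOpen (U i)) ∧ (⋃ i, U i) = univ ∧ ∀ i, ContractibleIn (U i)

/-- The (non-reduced) Lusternik–Schnirelmann category, valued in `ℕ∞`. -/
def cat (X : Type*) [TopologicalSpace X] : ℕ∞ :=
  sInf {n : ℕ∞ | ∃ m : ℕ, n = m ∧ CatLE X m}

/-- `x₀` is a non-degenerate basepoint of `X` : the inclusion `{x₀} ↪ X` is a
cofibration, i.e. the pair `(X, {x₀})` has the homotopy extension property. -/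
def NondegPt {X : Type*} [TopologicalSpace X] (x₀ : X) : Prop :=
  ∀ (Z : Type*) [TopologicalSpace Z] (f : C(X, Z)) (H : C(unitInterval, Z)),
    H 0 = f x₀ → ∃ G : C(X × unitInterval, Z),
      (∀ x, G (x, 0) = f x) ∧ (∀ t, G (x₀, t) = H t)

/-- The relation generating the wedge identification `inl x₀ ~ inr y₀`. -/
def WedgeRel {X Y : Type*} (x₀ : X) (y₀ : Y) : X ⊕ Y → X ⊕ Y → Prop :=
  fun a b => (a = Sum.inl x₀ ∨ a = Sum.inr y₀) ∧ (b = Sum.inl x₀ ∨ b = Sum.inr y₀)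

/-- The wedge sum `X ∨ Y` at the basepoints `x₀`, `y₀`. -/
def Wedge {X Y : Type*} [TopologicalSpace X] [TopologicalSpace Y] (x₀ : X) (y₀ : Y) :=
  Quot (WedgeRel x₀ y₀)

instance {X Y : Type*} [TopologicalSpace X] [TopologicalSpace Y] (x₀ : X) (y₀ : Y) :
    TopologicalSpace (Wedge x₀ y₀) :=
  inferInstanceAs (TopologicalSpace (Quot _))

/-- Inclusion of `X` into the wedge. -/
def Wedge.inl {X Y : Type*} [TopologicalSpace X] [TopologicalSpace Y] (x₀ : X) (y₀ : Y)
    (x : X) : Wedge x₀ y₀ := Quot.mk _ (Sum.inl x)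

/-- Inclusion of `Y` into the wedge. -/
def Wedge.inr {X Y : Type*} [TopologicalSpace X] [TopologicalSpace Y] (x₀ : X) (y₀ : Y)
    (y : Y) : Wedge x₀ y₀ := Quot.mk _ (Sum.inr y)

/-- The basepoint of the wedge. -/
def Wedge.pt {X Y : Type*} [TopologicalSpace X] [TopologicalSpace Y] (x₀ : X) (y₀ : Y) :
    Wedge x₀ y₀ := Wedge.inl x₀ y₀ x₀


theorem stmt4 {X : Type*} [TopologicalSpace X] (x₀ : X) (W : Set (X × X)) (hW : IsOpen W)
    (H : C(↥W × unitInterval, X × X))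
    (hH0 : ∀ u : W, H (u, 0) = u) (hH1 : ∀ u : W, H (u, 1) = (x₀, x₀)) :
    ∃ ρ : C(↥W, C(unitInterval, X)),
      (∀ (u : W) (t : unitInterval) (ht : (t : ℝ) ≤ 1 / 2),
        ρ u t = (H (u, ⟨2 * (t : ℝ), Set.mem_Icc.mpr ⟨by linarith [t.2.1], by linarith⟩⟩)).1) ∧
      (∀ (u : W) (t : unitInterval) (ht : 1 / 2 ≤ (t : ℝ)),
        ρ u t = (H (u, ⟨2 - 2 * (t : ℝ),
          Set.mem_Icc.mpr ⟨by linarith [t.2.2], by linarith⟩⟩)).2) ∧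
      (∀ u : W, ρ u 0 = (u : X × X).1 ∧ ρ u 1 = (u : X × X).2) := by
  classical
  have hmem1 : ∀ t : unitInterval, min (2 * (t:ℝ)) 1 ∈ unitInterval := fun t =>
    Set.mem_Icc.mpr ⟨le_min (by nlinarith [t.2.1]) zero_le_one, min_le_right _ _⟩
  have hmem2 : ∀ t : unitInterval, min (2 - 2 * (t:ℝ)) 1 ∈ unitInterval := fun t =>
    Set.mem_Icc.mpr ⟨le_min (by nlinarith [t.2.2]) zero_le_one, min_le_right _ _⟩
  have hc : Continuous (fun p : ↥W × unitInterval =>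
      if (p.2 : ℝ) ≤ 1/2 then (H (p.1, ⟨min (2 * (p.2:ℝ)) 1, hmem1 p.2⟩)).1
      else (H (p.1, ⟨min (2 - 2 * (p.2:ℝ)) 1, hmem2 p.2⟩)).2) := by
    apply Continuous.if_le
    · exact continuous_fst.comp <| H.continuous.comp <| continuous_fst.prodMk <|
        Continuous.subtype_mk (by fun_prop) _
    · exact continuous_snd.comp <| H.continuous.comp <| continuous_fst.prodMk <|
        Continuous.subtype_mk (by fun_prop) _
    · fun_prop
    · fun_prop
    · intro p hp
      have h1 : (⟨min (2 * (p.2:ℝ)) 1, hmem1 p.2⟩ : unitInterval) = 1 := by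
        ext; simp [hp]
      have h2 : (⟨min (2 - 2 * (p.2:ℝ)) 1, hmem2 p.2⟩ : unitInterval) = 1 := by
        ext; simp [hp]; norm_num
      rw [h1, h2, hH1 p.1]
  refine ⟨ContinuousMap.curry ⟨_, hc⟩, ?_, ?_, ?_⟩
  · intro u t ht
    simp only [ContinuousMap.curry_apply, ContinuousMap.coe_mk, if_pos ht]
    have h1 : (⟨min (2*(t:ℝ)) 1, hmem1 t⟩ : unitInterval)
        = ⟨2 * (t : ℝ), Set.mem_Icc.mpr ⟨by linarith [t.2.1], by linarith⟩⟩ :=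
      Subtype.ext (min_eq_left (by linarith))
    rw [h1]
  · intro u t ht
    simp only [ContinuousMap.curry_apply, ContinuousMap.coe_mk]
    rcases eq_or_lt_of_le ht with h | h
    · rw [if_pos h.symm.le]
      have h1 : (⟨min (2 * (t:ℝ)) 1, hmem1 t⟩ : unitInterval) = 1 := by
        ext; simp [← h]; try norm_num
      have h2 : (⟨2 - 2 * (t:ℝ), Set.mem_Icc.mpr ⟨by linarith [t.2.2], by linarith⟩⟩ : unitInterval) = 1 := by
        ext; simp [← h]; try norm_num
      rw [h1, h2, hH1 u]
    · rw [if_neg (not_le.mpr h)]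
      have h1 : (⟨min (2 - 2*(t:ℝ)) 1, hmem2 t⟩ : unitInterval)
          = ⟨2 - 2 * (t : ℝ), Set.mem_Icc.mpr ⟨by linarith [t.2.2], by linarith⟩⟩ :=
        Subtype.ext (min_eq_left (by linarith [t.2.2]))
      rw [h1]
  · intro u
    constructor
    · have : ((0:unitInterval):ℝ) ≤ 1/2 := by norm_num
      simp only [ContinuousMap.curry_apply, ContinuousMap.coe_mk, if_pos this]
      have h1 : (⟨min (2 * ((0:unitInterval):ℝ)) 1, hmem1 0⟩ : unitInterval) = 0 := by
        ext; simp
      rw [h1, hH0 u]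
    · have : ¬ ((1:unitInterval):ℝ) ≤ 1/2 := by norm_num
      simp only [ContinuousMap.curry_apply, ContinuousMap.coe_mk, if_neg this]
      have h1 : (⟨min (2 - 2 * ((1:unitInterval):ℝ)) 1, hmem2 1⟩ : unitInterval) = 0 := by
        ext; simp
      rw [h1, hH0 u]
end
end

section
/- If W is an open subset of X × X that is contractible within X × X (i.e., the inclusion W ↪ X × X is null-homotopic), then there exists a continuous local section over W of the map π : C([0,1],X) → X × X, γ ↦ (γ(0),γ(1)). In particular, every categorical open cover of X × X of cardinality n witnesses TC(X) ≤ n, so TC(X) ≤ cat(X × X). -/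
open Set unitInterval

noncomputable section

/-!
Compose a null-homotopy of `W ↪ X × X` onto `(x₀, y₀)` with the two projections: a point `(a, b) ∈ W`
then comes with paths `a ⇝ x₀` and `b ⇝ y₀` depending continuously on it, and joining them
by a fixed path `x₀ ⇝ y₀` gives a path `a ⇝ b` depending continuously on `(a, b)`.
-/

section PathFamily

variable {Y Z : Type*} [TopologicalSpace Y] [TopologicalSpace Z]

def ContinuousMap.pathOfHomotopy (F : C(Y × I, Z)) {f g : Y → Z}
    (h₀ : ∀ y, F (y, 0) = f y) (h₁ : ∀ y, F (y, 1) = g y) (y : Y) : Path (f y) (g y) where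
  toFun t := F (y, t)
  source' := h₀ y
  target' := h₁ y

theorem ContinuousMap.continuous_uncurry_pathOfHomotopy (F : C(Y × I, Z)) {f g : Y → Z}
    (h₀ : ∀ y, F (y, 0) = f y) (h₁ : ∀ y, F (y, 1) = g y) :
    Continuous ↿(F.pathOfHomotopy h₀ h₁) :=
  F.continuous

end PathFamily

theorem hasSecAt_of_continuous_family {X : Type*} [TopologicalSpace X] {U : Set (X × X)}
    (γ : ∀ u : U, Path (u : X × X).1 (u : X × X).2) (hγ : Continuous ↿γ) : HasSecAt U :=
  ⟨(ContinuousMap.mk ↿γ hγ).curry, fun u => ⟨(γ u).source, (γ u).target⟩⟩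

theorem ContractibleIn.hasSecAt {X : Type*} [TopologicalSpace X] [PathConnectedSpace X]
    {W : Set (X × X)} (hc : ContractibleIn W) : HasSecAt W := by
  obtain ⟨c, F, hF₀, hF₁⟩ := hc
  let F₁ := (ContinuousMap.fst : C(X × X, X)).comp F
  let F₂ := (ContinuousMap.snd : C(X × X, X)).comp F
  have h₁ := F₁.continuous_uncurry_pathOfHomotopy (fun w => congrArg Prod.fst (hF₀ w))
    (fun w => congrArg Prod.fst (hF₁ w))
  have h₂ := F₂.continuous_uncurry_pathOfHomotopy (fun w => congrArg Prod.snd (hF₀ w))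
    (fun w => congrArg Prod.snd (hF₁ w))
  let δ : Path c.1 c.2 := PathConnectedSpace.somePath c.1 c.2
  refine hasSecAt_of_continuous_family _ <| Path.trans_continuous_family _ h₁ _ <|
    Path.trans_continuous_family (fun _ => δ) ?_ _ (Path.symm_continuous_family _ h₂)
  exact δ.continuous.comp continuous_snd

theorem CatLE.tcle {X : Type*} [TopologicalSpace X] [PathConnectedSpace X] {n : ℕ}
    (h : CatLE (X × X) n) : TCLE X n :=
  let ⟨U, hopen, hcov, hctr⟩ := h
  ⟨U, hopen, hcov, fun i => (hctr i).hasSecAt⟩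

theorem tc_le_cat (X : Type*) [TopologicalSpace X] [PathConnectedSpace X] :
    tc X ≤ cat (X × X) :=
  sInf_le_sInf fun _ ⟨m, hm, h⟩ => ⟨m, hm, h.tcle⟩

theorem stmt5_general {X : Type*} [TopologicalSpace X] [PathConnectedSpace X]
    (W : Set (X × X)) (hc : ContractibleIn W) :
    HasSecAt W ∧ tc X ≤ cat (X × X) :=
  ⟨hc.hasSecAt, tc_le_cat X⟩

theorem stmt5 {X : Type*} [TopologicalSpace X] [PathConnectedSpace X]
    (W : Set (X × X)) (hW : IsOpen W) (hc : ContractibleIn W) :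
    HasSecAt W ∧ tc X ≤ cat (X × X) :=
  stmt5_general W hc
end
end

section
/- For any path-connected topological spaces X and Y with basepoints, TC(X ∨ Y) ≥ max{TC(X), TC(Y), cat(X × Y)}. -/
open Set unitInterval

noncomputable section

section Pullback

variable {A W Z : Type*} [TopologicalSpace A] [TopologicalSpace W] [TopologicalSpace Z]

lemma HasSecAt.pullback {U : Set (W × W)} (hU : HasSecAt U) (f : C(A, W × W)) :
    ∃ s : C(f ⁻¹' U, C(I, W)), ∀ a, s a 0 = (f a).1 ∧ s a 1 = (f a).2 := by
  obtain ⟨s, hs⟩ := hU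
  exact ⟨s.comp (f.restrictPreimage U), fun a => hs _⟩

lemma TCLE.of_retraction (r : C(W, Z)) (j : C(Z, W)) (hrj : ∀ z, r (j z) = z) {n : ℕ}
    (h : TCLE W n) : TCLE Z n := by
  obtain ⟨U, hopen, hcov, hsec⟩ := h
  let jj := j.prodMap j
  refine ⟨fun i => jj ⁻¹' U i, fun i => (hopen i).preimage jj.continuous, ?_, fun i => ?_⟩
  · rw [← preimage_iUnion, hcov, preimage_univ]
  obtain ⟨s, hs⟩ := (hsec i).pullback jj
  refine ⟨⟨fun a => r.comp (s a), by fun_prop⟩, fun a => ?_⟩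
  simp only [ContinuousMap.coe_mk, ContinuousMap.comp_apply, (hs a).1, (hs a).2]
  exact ⟨hrj _, hrj _⟩

end Pullback

lemma sInf_natCast_le_sInf_natCast {P Q : ℕ → Prop} (hPQ : ∀ n, P n → Q n) :
    sInf {x : ℕ∞ | ∃ m : ℕ, x = m ∧ Q m} ≤ sInf {x : ℕ∞ | ∃ m : ℕ, x = m ∧ P m} :=
  sInf_le_sInf fun _ ⟨m, hx, hm⟩ => ⟨m, hx, hPQ m hm⟩

lemma tc_le_tc_of_retraction {W Z : Type*} [TopologicalSpace W] [TopologicalSpace Z]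
    (r : C(W, Z)) (j : C(Z, W)) (hrj : ∀ z, r (j z) = z) : tc Z ≤ tc W :=
  sInf_natCast_le_sInf_natCast fun _ => TCLE.of_retraction r j hrj

namespace Wedge

variable {X Y Z : Type*} [TopologicalSpace X] [TopologicalSpace Y] [TopologicalSpace Z]
  {x₀ : X} {y₀ : Y}

lemma continuous_inl : Continuous (Wedge.inl x₀ y₀) :=
  continuous_quot_mk.comp _root_.continuous_inl

lemma continuous_inr : Continuous (Wedge.inr x₀ y₀) :=
  continuous_quot_mk.comp _root_.continuous_inr

def lift (f : C(X, Z)) (g : C(Y, Z)) (hfg : f x₀ = g y₀) : C(Wedge x₀ y₀, Z) where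
  toFun := Quot.lift (Sum.elim f g) <| by
    rintro a b ⟨rfl | rfl, rfl | rfl⟩ <;> simp [hfg]
  continuous_toFun := continuous_quot_lift _ (f.continuous.sumElim g.continuous)

variable (x₀ y₀)

def retractLeft : C(Wedge x₀ y₀, X) :=
  lift (ContinuousMap.id X) (ContinuousMap.const Y x₀) rfl

def retractRight : C(Wedge x₀ y₀, Y) :=
  lift (ContinuousMap.const X y₀) (ContinuousMap.id Y) rfl

lemma tc_left_le : tc X ≤ tc (Wedge x₀ y₀) :=
  tc_le_tc_of_retraction (retractLeft x₀ y₀) ⟨Wedge.inl x₀ y₀, continuous_inl⟩ fun _ => rfl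

lemma tc_right_le : tc Y ≤ tc (Wedge x₀ y₀) :=
  tc_le_tc_of_retraction (retractRight x₀ y₀) ⟨Wedge.inr x₀ y₀, continuous_inr⟩ fun _ => rfl

/-- A path `γ` in the wedge from `inl x` to `inr y` contracts `(x, y)` to `(x₀, y₀)` along
`t ↦ (retractLeft (γ t), retractRight (γ (1 - t)))`; a section of the endpoint map over `U`
makes this continuous in `(x, y) ∈ (inl × inr)⁻¹ U`. -/
lemma catLE_prod_of_tcLE {n : ℕ} (h : TCLE (Wedge x₀ y₀) n) : CatLE (X × Y) n := by
  obtain ⟨U, hopen, hcov, hsec⟩ := h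
  let f : C(X × Y, Wedge x₀ y₀ × Wedge x₀ y₀) :=
    ContinuousMap.prodMap ⟨Wedge.inl x₀ y₀, continuous_inl⟩ ⟨Wedge.inr x₀ y₀, continuous_inr⟩
  refine ⟨fun i => f ⁻¹' U i, fun i => (hopen i).preimage f.continuous, ?_, fun i => ?_⟩
  · rw [← preimage_iUnion, hcov, preimage_univ]
  obtain ⟨γ, hγ⟩ := (hsec i).pullback f
  refine ⟨(x₀, y₀), ⟨fun p => (retractLeft x₀ y₀ (γ p.1 p.2),
    retractRight x₀ y₀ (γ p.1 (σ p.2))), by fun_prop⟩, fun v => ?_, fun v => ?_⟩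
  · simp only [ContinuousMap.coe_mk, symm_zero, (hγ v).1, (hγ v).2]
    rfl
  · simp only [ContinuousMap.coe_mk, symm_one, (hγ v).1, (hγ v).2]
    rfl

lemma cat_prod_le_tc : cat (X × Y) ≤ tc (Wedge x₀ y₀) :=
  sInf_natCast_le_sInf_natCast fun _ => catLE_prod_of_tcLE x₀ y₀

end Wedge

theorem stmt9_general {X Y : Type*} [TopologicalSpace X] [TopologicalSpace Y]
    (x₀ : X) (y₀ : Y) :
    max (max (tc X) (tc Y)) (cat (X × Y)) ≤ tc (Wedge x₀ y₀) :=
  max_le (max_le (Wedge.tc_left_le x₀ y₀) (Wedge.tc_right_le x₀ y₀))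
    (Wedge.cat_prod_le_tc x₀ y₀)

theorem stmt9 {X Y : Type*} [TopologicalSpace X] [TopologicalSpace Y]
    [PathConnectedSpace X] [PathConnectedSpace Y] (x₀ : X) (y₀ : Y) :
    max (max (tc X) (tc Y)) (cat (X × Y)) ≤ tc (Wedge x₀ y₀) :=
  stmt9_general x₀ y₀
end
end

section
/- Let X be a normal space, U₁,…,Uₙ an open cover, W₁,…,Wₙ a shrinking with cl(Wᵢ) ⊆ Uᵢ, and suppose z₀ ∈ Uᵢ exactly for i = 1,…,k (k < n). Let B be any open neighbourhood of z₀. Then 𝒩 := B ∩ U₁ ∩ ⋯ ∩ Uₖ ∩ (X ∖ cl(W_{k+1})) ∩ ⋯ ∩ (X ∖ cl(Wₙ)) is an open neighbourhood of z₀ disjoint from Wⱼ for every j > k, and for any open M with z₀ ∈ M ⊆ cl(M) ⊆ 𝒩, the sets Vᵢ := (Uᵢ ∩ (X ∖ cl(M))) ∪ M for i ≤ k and Vᵢ := Wᵢ ∪ 𝒩 for i > k form an open cover of X with z₀ ∈ Vᵢ for all i. -/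
open Set unitInterval

noncomputable section

section PointedCover

variable {X ι : Type*} [TopologicalSpace X] (p : ι → Prop) [DecidablePred p]

/-- `p i` marks the members of the cover that contain the basepoint. -/
def pointedNbhd (B : Set X) (U W : ι → Set X) : Set X :=
  B ∩ ⋂ i, if p i then U i else (closure (W i))ᶜ

def pointedCover (U W : ι → Set X) (M N : Set X) (i : ι) : Set X :=
  if p i then (U i ∩ (closure M)ᶜ) ∪ M else W i ∪ N

variable {p} {B M N : Set X} {U W : ι → Set X}

theorem isOpen_pointedNbhd [Finite ι] (hB : IsOpen B) (hU : ∀ i, IsOpen (U i)) :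
    IsOpen (pointedNbhd p B U W) := by
  refine hB.inter (isOpen_iInter_of_finite fun i => ?_)
  split_ifs
  · exact hU i
  · exact isClosed_closure.isOpen_compl

theorem mem_pointedNbhd {z : X} (hzB : z ∈ B) (hz : ∀ i, z ∈ U i ↔ p i)
    (hWU : ∀ i, closure (W i) ⊆ U i) : z ∈ pointedNbhd p B U W := by
  refine ⟨hzB, mem_iInter.2 fun i => ?_⟩
  split_ifs with hi
  · exact (hz i).2 hi
  · exact fun hzW => hi ((hz i).1 (hWU i hzW))

theorem pointedNbhd_inter_eq_empty {j : ι} (hj : ¬p j) : pointedNbhd p B U W ∩ W j = ∅ := by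
  refine Set.eq_empty_of_forall_notMem fun x ⟨hxN, hxW⟩ => ?_
  have hx := mem_iInter.1 hxN.2 j
  rw [if_neg hj] at hx
  exact hx (subset_closure hxW)

theorem isOpen_pointedCover (hU : ∀ i, IsOpen (U i)) (hW : ∀ i, IsOpen (W i)) (hM : IsOpen M)
    (hN : IsOpen N) (i : ι) : IsOpen (pointedCover p U W M N i) := by
  unfold pointedCover
  split_ifs
  · exact ((hU i).inter isClosed_closure.isOpen_compl).union hM
  · exact (hW i).union hN

theorem mem_pointedCover {z : X} (hzM : z ∈ M) (hzN : z ∈ N) (i : ι) :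
    z ∈ pointedCover p U W M N i := by
  unfold pointedCover
  split_ifs
  exacts [Or.inr hzM, Or.inr hzN]

theorem iUnion_pointedCover_eq_univ (hW : ⋃ i, W i = univ) (hWU : ∀ i, closure (W i) ⊆ U i)
    (hMN : closure M ⊆ N) {j : ι} (hj : ¬p j) : ⋃ i, pointedCover p U W M N i = univ := by
  refine Set.eq_univ_of_forall fun x => mem_iUnion.2 ?_
  by_cases hxM : x ∈ closure M
  · exact ⟨j, by rw [pointedCover, if_neg hj]; exact Or.inr (hMN hxM)⟩
  · obtain ⟨i, hxW⟩ := mem_iUnion.1 (hW ▸ mem_univ x)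
    refine ⟨i, ?_⟩
    unfold pointedCover
    split_ifs
    · exact Or.inl ⟨hWU i (subset_closure hxW), hxM⟩
    · exact Or.inl hxW

end PointedCover

theorem stmt19_general {X : Type*} [TopologicalSpace X] (z₀ : X) (n k : ℕ)
    (hkn : k < n)
    (U W : Fin n → Set X) (hUopen : ∀ i, IsOpen (U i))
    (hz : ∀ i : Fin n, z₀ ∈ U i ↔ (i : ℕ) < k)
    (hWopen : ∀ i, IsOpen (W i)) (hWcover : (⋃ i, W i) = univ)
    (hWU : ∀ i, closure (W i) ⊆ U i)
    (B : Set X) (hB : IsOpen B) (hzB : z₀ ∈ B)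
    (N : Set X)
    (hN : N = B ∩ ⋂ i : Fin n, if (i : ℕ) < k then U i else (closure (W i))ᶜ)
    (M : Set X) (hM : IsOpen M) (hzM : z₀ ∈ M) (hMN : closure M ⊆ N)
    (V : Fin n → Set X)
    (hV : ∀ i : Fin n,
      V i = if (i : ℕ) < k then (U i ∩ (closure M)ᶜ) ∪ M else W i ∪ N) :
    IsOpen N ∧ z₀ ∈ N ∧ (∀ j : Fin n, k ≤ (j : ℕ) → N ∩ W j = ∅) ∧
      (∀ i, IsOpen (V i)) ∧ (⋃ i, V i) = univ ∧ (∀ i, z₀ ∈ V i) := by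
  replace hN : N = pointedNbhd (fun i : Fin n => (i : ℕ) < k) B U W := hN
  replace hV : V = pointedCover (fun i : Fin n => (i : ℕ) < k) U W M N := funext hV
  have hNopen : IsOpen N := hN ▸ isOpen_pointedNbhd hB hUopen
  have hzN : z₀ ∈ N := hN ▸ mem_pointedNbhd hzB hz hWU
  subst hV
  refine ⟨hNopen, hzN, fun j hj => hN ▸ pointedNbhd_inter_eq_empty (not_lt.2 hj),
    isOpen_pointedCover hUopen hWopen hM hNopen,
    iUnion_pointedCover_eq_univ hWcover hWU hMN (j := ⟨k, hkn⟩) (lt_irrefl k),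
    mem_pointedCover hzM hzN⟩

theorem stmt19 {X : Type*} [TopologicalSpace X] [NormalSpace X] (z₀ : X) (n k : ℕ)
    (hk : 1 ≤ k) (hkn : k < n)
    (U W : Fin n → Set X) (hUopen : ∀ i, IsOpen (U i)) (hUcover : (⋃ i, U i) = univ)
    (hz : ∀ i : Fin n, z₀ ∈ U i ↔ (i : ℕ) < k)
    (hWopen : ∀ i, IsOpen (W i)) (hWcover : (⋃ i, W i) = univ)
    (hWU : ∀ i, closure (W i) ⊆ U i)
    (B : Set X) (hB : IsOpen B) (hzB : z₀ ∈ B)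
    (N : Set X)
    (hN : N = B ∩ ⋂ i : Fin n, if (i : ℕ) < k then U i else (closure (W i))ᶜ)
    (M : Set X) (hM : IsOpen M) (hzM : z₀ ∈ M) (hMN : closure M ⊆ N)
    (V : Fin n → Set X)
    (hV : ∀ i : Fin n,
      V i = if (i : ℕ) < k then (U i ∩ (closure M)ᶜ) ∪ M else W i ∪ N) :
    IsOpen N ∧ z₀ ∈ N ∧ (∀ j : Fin n, k ≤ (j : ℕ) → N ∩ W j = ∅) ∧
      (∀ i, IsOpen (V i)) ∧ (⋃ i, V i) = univ ∧ (∀ i, z₀ ∈ V i) :=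
  stmt19_general z₀ n k hkn U W hUopen hz hWopen hWcover hWU B hB hzB N hN M hM hzM hMN V hV
end
end
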